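/- Let L be a diamond and G a finite MH-homogeneous vertex-uniform L-colored graph containing a pair of vertices with edge color 1. Then any two distinct vertices x, y lying in the same connected component of G satisfy χ(x,y) = 1. -/

import Mathlib

/-- An `L`-colored graph on vertex set `V`: vertex colors and symmetric,
irreflexive edge colors (color `⊥` means "no edge"). -/
structure LGraph (L : Type*) [PartialOrder L] [BoundedOrder L] (V : Type*) where
  vcol : V → L
  ecol : V → V → L
  ecol_irrefl : ∀ x, ecol x x = ⊥
  ecol_symm : ∀ x y, ecol x y = ecol y x

variable {L V : Type*} [PartialOrder L] [BoundedOrder L]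

/-- An endomorphism of an `L`-colored graph weakly increases all colors. -/
def LGraph.IsEndo (G : LGraph L V) (f : V → V) : Prop :=
  (∀ x, G.vcol x ≤ G.vcol (f x)) ∧ (∀ x y, G.ecol x y ≤ G.ecol (f x) (f y))

/-- A homomorphism from the finite induced substructure on `S` into `G`. -/
def LGraph.IsPartialHom (G : LGraph L V) (S : Set V) (f : V → V) : Prop :=
  (∀ x ∈ S, G.vcol x ≤ G.vcol (f x)) ∧
  (∀ x ∈ S, ∀ y ∈ S, G.ecol x y ≤ G.ecol (f x) (f y))

/-- `G` is MH-homogeneous: every monomorphism between finite induced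
substructures extends to an endomorphism. -/
def LGraph.MH (G : LGraph L V) : Prop :=
  ∀ S : Set V, S.Finite → ∀ f : V → V, Set.InjOn f S → G.IsPartialHom S f →
    ∃ g : V → V, G.IsEndo g ∧ ∀ x ∈ S, g x = f x

/-- `G` is HH-homogeneous: every homomorphism between finite induced
substructures extends to an endomorphism. -/
def LGraph.HH (G : LGraph L V) : Prop :=
  ∀ S : Set V, S.Finite → ∀ f : V → V, G.IsPartialHom S f →
    ∃ g : V → V, G.IsEndo g ∧ ∀ x ∈ S, g x = f x

/-- Adjacency: edge color is nonzero. -/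
def LGraph.Adj (G : LGraph L V) (x y : V) : Prop := G.ecol x y ≠ ⊥

/-- Two vertices are connected if joined by a path of edges of nonzero color. -/
def LGraph.Conn (G : LGraph L V) (x y : V) : Prop := Relation.ReflTransGen G.Adj x y

/-- `S` is a connected component of `G`. -/
def LGraph.IsComponent (G : LGraph L V) (S : Set V) : Prop :=
  ∃ x : V, S = {y | G.Conn x y}

/-- All vertices of `G` have the same color. -/
def LGraph.VertexUniform (G : LGraph L V) : Prop := ∃ α : L, ∀ x, G.vcol x = α

/-- `G` restricted to `S` is a uniform `L`-colored graph: all vertices of one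
color and all edges between distinct vertices of one fixed nonzero color. -/
def LGraph.UniformOn (G : LGraph L V) (S : Set V) : Prop :=
  (∃ α : L, ∀ x ∈ S, G.vcol x = α) ∧
  (∃ β : L, ⊥ < β ∧ ∀ x ∈ S, ∀ y ∈ S, x ≠ y → G.ecol x y = β)

/-- `G[S]` is isomorphic to `U(n, α, β)`, the connected uniform graph on `n`
vertices, all colored `α`, with all edges colored `β ≻ ⊥`. -/
def LGraph.IsU (G : LGraph L V) (S : Set V) (n : ℕ) (α β : L) : Prop :=
  S.ncard = n ∧ (∀ x ∈ S, G.vcol x = α) ∧ ⊥ < β ∧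
  (∀ x ∈ S, ∀ y ∈ S, x ≠ y → G.ecol x y = β)

/-- `L` is a diamond: all elements other than `⊥` and `⊤` are pairwise
incomparable. -/
def IsDiamond (L : Type*) [PartialOrder L] [BoundedOrder L] : Prop :=
  ∀ a b : L, a ≠ ⊥ → a ≠ ⊤ → b ≠ ⊥ → b ≠ ⊤ → a ≤ b → a = b

/-- An automorphism of an `L`-colored graph. -/
def LGraph.IsAuto (G : LGraph L V) (f : V → V) : Prop :=
  Function.Bijective f ∧ (∀ x, G.vcol (f x) = G.vcol x) ∧
  (∀ x y, G.ecol (f x) (f y) = G.ecol x y)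

/-- `G` is ultrahomogeneous: every isomorphism between finite induced
substructures extends to an automorphism. -/
def LGraph.Ultra (G : LGraph L V) : Prop :=
  ∀ S : Set V, S.Finite → ∀ f : V → V, Set.InjOn f S →
    (∀ x ∈ S, G.vcol (f x) = G.vcol x) →
    (∀ x ∈ S, ∀ y ∈ S, G.ecol (f x) (f y) = G.ecol x y) →
    ∃ g : V → V, G.IsAuto g ∧ ∀ x ∈ S, g x = f x

/-! Call `p ≠ q` in one component with `χ(p, q) ≠ ⊤` a bad pair. By induction on the number of
vertices, every endomorphism fixing a bad pair is bijective: otherwise an idempotent power of it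
retracts `G` onto a smaller MH-homogeneous graph in which `p` and `q` stay connected. Bijective
endomorphisms of a finite graph preserve colors, and MH-homogeneity lets one move a vertex while
fixing `p` and `q`; together this forces every `⊤`-neighbour of `p` to be a non-neighbour of `q`.
Walking along a path from `x`, every vertex of its component is then a `⊤`-neighbour of `x`. -/

theorem Finite.exists_iterate_succ_idempotent {α : Type*} [Finite α] (f : α → α) :
    ∃ n, ∀ x, f^[n + 1] (f^[n + 1] x) = f^[n + 1] x := by
  obtain ⟨i, j, hij, hfij⟩ : ∃ i j, i < j ∧ f^[i] = f^[j] := by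
    obtain ⟨a, b, hab, h⟩ := Finite.exists_ne_map_eq_of_infinite fun n : ℕ => f^[n]
    rcases hab.lt_or_gt with hab | hab
    exacts [⟨a, b, hab, h⟩, ⟨b, a, hab, h.symm⟩]
  have hperiod : ∀ n, i ≤ n → f^[n + (j - i)] = f^[n] := fun n hn => by
    rw [show n + (j - i) = (n - i) + j by omega, Function.iterate_add, ← hfij,
      ← Function.iterate_add, Nat.sub_add_cancel hn]
  have hperiod_mul : ∀ k n, i ≤ n → f^[n + k * (j - i)] = f^[n] := fun k => by
    induction k with
    | zero => simp
    | succ k ih =>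
      intro n hn
      rw [Nat.succ_mul, ← add_assoc, hperiod _ (by omega), ih n hn]
  refine ⟨(i + 1) * (j - i) - 1, fun x => ?_⟩
  have hpos : 1 ≤ (i + 1) * (j - i) := Nat.mul_pos (by omega) (by omega)
  rw [Nat.sub_add_cancel hpos, ← Function.iterate_add_apply,
    hperiod_mul _ _ (le_trans (by omega) (Nat.le_mul_of_pos_right _ (by omega)))]

namespace LGraph

variable {G : LGraph L V}

theorem Adj.symm {x y : V} (h : G.Adj x y) : G.Adj y x := by
  rwa [Adj, G.ecol_symm]

theorem Conn.symm {x y : V} (h : G.Conn x y) : G.Conn y x :=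
  Relation.ReflTransGen.mono (fun _ _ h => Adj.symm h) y x (Relation.reflTransGen_swap.mpr h)

theorem IsEndo.comp {f g : V → V} (hf : G.IsEndo f) (hg : G.IsEndo g) : G.IsEndo (g ∘ f) :=
  ⟨fun x => (hf.1 x).trans (hg.1 _), fun x y => (hf.2 x y).trans (hg.2 _ _)⟩

theorem IsEndo.iterate {f : V → V} (hf : G.IsEndo f) : ∀ n, G.IsEndo f^[n]
  | 0 => ⟨fun _ => le_rfl, fun _ _ => le_rfl⟩
  | n + 1 => hf.comp (hf.iterate n)

theorem IsEndo.adj {f : V → V} (hf : G.IsEndo f) {x y : V} (h : G.Adj x y) :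
    G.Adj (f x) (f y) :=
  ne_bot_of_le_ne_bot h (hf.2 x y)

theorem IsEndo.ecol_le_of_apply_eq {f : V → V} (hf : G.IsEndo f) {p : V} (hp : f p = p)
    (x : V) : G.ecol p x ≤ G.ecol p (f x) := by
  simpa only [hp] using hf.2 p x

/-- Some power of a bijection of a finite set is the identity, which squeezes the
colors between `χ(x, y)` and `χ(g x, g y)`. -/
theorem IsEndo.ecol_apply_of_bijective [Finite V] {g : V → V} (hg : G.IsEndo g)
    (hbij : Function.Bijective g) (x y : V) : G.ecol (g x) (g y) = G.ecol x y := by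
  obtain ⟨n, hn⟩ := Finite.exists_iterate_succ_idempotent g
  have hid : ∀ z, g^[n + 1] z = z := fun z => (hbij.injective.iterate _) (hn z)
  refine le_antisymm ?_ (hg.2 x y)
  calc G.ecol (g x) (g y) ≤ G.ecol (g^[n] (g x)) (g^[n] (g y)) := (hg.iterate n).2 _ _
    _ = G.ecol x y := by
      rw [← Function.iterate_succ_apply, ← Function.iterate_succ_apply, hid, hid]

def induce (G : LGraph L V) (S : Set V) : LGraph L S where
  vcol x := G.vcol x
  ecol x y := G.ecol x y
  ecol_irrefl x := G.ecol_irrefl x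
  ecol_symm x y := G.ecol_symm x y

theorem VertexUniform.induce (hVU : G.VertexUniform) (S : Set V) :
    (G.induce S).VertexUniform :=
  let ⟨α, hα⟩ := hVU
  ⟨α, fun x => hα x⟩

theorem IsEndo.conn_induce_range {e : V → V} (he : G.IsEndo e) {x y : V} (h : G.Conn x y) :
    (G.induce (Set.range e)).Conn ⟨e x, Set.mem_range_self x⟩ ⟨e y, Set.mem_range_self y⟩ :=
  Relation.ReflTransGen.lift (p := (G.induce (Set.range e)).Adj)
    (fun z => ⟨e z, Set.mem_range_self z⟩) (fun _ _ => he.adj) x y h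

/-- A retract of an MH-homogeneous graph is MH-homogeneous: extend a partial monomorphism of the
retract inside `G`, then project back with the retraction. -/
theorem MH.induce_range (hMH : G.MH) {e : V → V} (he : G.IsEndo e)
    (hidem : ∀ x, e (e x) = e x) : (G.induce (Set.range e)).MH := by
  intro S hS f hf hhom
  set F : V → V := Function.extend Subtype.val (fun x => (f x : V)) id
  have hF : ∀ x : Set.range e, F x = f x := Subtype.val_injective.extend_apply _ _
  obtain ⟨g, hg, hgF⟩ := hMH (Subtype.val '' S) (hS.image _) F
    (by
      rintro _ ⟨x, hx, rfl⟩ _ ⟨y, hy, rfl⟩ hxy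
      rw [hF, hF] at hxy
      exact congrArg Subtype.val (hf hx hy (Subtype.val_injective hxy)))
    ⟨by rintro _ ⟨x, hx, rfl⟩; rw [hF]; exact hhom.1 x hx,
     by rintro _ ⟨x, hx, rfl⟩ _ ⟨y, hy, rfl⟩; rw [hF, hF]; exact hhom.2 x hx y hy⟩
  refine ⟨fun x => ⟨e (g x), Set.mem_range_self _⟩,
    ⟨fun x => (hg.comp he).1 x, fun x y => (hg.comp he).2 x y⟩, fun x hx => Subtype.ext ?_⟩
  obtain ⟨z, hz⟩ := (f x).2
  change e (g x) = f x
  rw [hgF x ⟨x, hx, rfl⟩, hF, ← hz, hidem]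

theorem MH.exists_isEndo_fixing (hMH : G.MH) (hVU : G.VertexUniform) {S : Set V}
    (hS : S.Finite) {u v : V} (hu : u ∉ S) (hv : v ∉ S)
    (hcol : ∀ x ∈ S, G.ecol x u ≤ G.ecol x v) :
    ∃ k, G.IsEndo k ∧ (∀ x ∈ S, k x = x) ∧ k u = v := by
  classical
  obtain ⟨α, hα⟩ := hVU
  have hfix : ∀ x ∈ S, Function.update id u v x = x := fun x hx => by
    rw [Function.update_of_ne (ne_of_mem_of_not_mem hx hu), id]
  have hcol' : ∀ x ∈ S, G.ecol u x ≤ G.ecol v x := fun x hx => by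
    rw [G.ecol_symm u, G.ecol_symm v]; exact hcol x hx
  obtain ⟨k, hk, hkf⟩ := hMH (insert u S) (hS.insert u) (Function.update id u v)
    (by
      rintro x (rfl | hx) y (rfl | hy) hxy
      · rfl
      · rw [Function.update_self, hfix y hy] at hxy
        exact absurd hy (hxy ▸ hv)
      · rw [hfix x hx, Function.update_self] at hxy
        exact absurd hx (hxy ▸ hv)
      · rwa [hfix x hx, hfix y hy] at hxy)
    ⟨fun x _ => by rw [hα, hα],
     by
      rintro x (rfl | hx) y (rfl | hy)
      · simp only [Function.update_self, G.ecol_irrefl, le_refl]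
      · rw [Function.update_self, hfix y hy]; exact hcol' y hy
      · rw [hfix x hx, Function.update_self]; exact hcol x hx
      · rw [hfix x hx, hfix y hy]⟩
  refine ⟨k, hk, fun x hx => ?_, ?_⟩
  · rw [hkf x (Set.mem_insert_of_mem u hx), hfix x hx]
  · rw [hkf u (Set.mem_insert u S), Function.update_self]

theorem MH.exists_ecol_eq_top (hMH : G.MH) (hVU : G.VertexUniform) {x0 y0 : V}
    (h1 : G.ecol x0 y0 = ⊤) (p : V) : ∃ t, G.ecol p t = ⊤ := by
  obtain ⟨k, hk, -, hkx0⟩ := hMH.exists_isEndo_fixing hVU Set.finite_empty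
    (Set.notMem_empty x0) (Set.notMem_empty p) (by simp)
  exact ⟨k y0, top_unique (h1 ▸ hkx0 ▸ hk.2 x0 y0)⟩

def IsRigidPair (G : LGraph L V) (p q : V) : Prop :=
  ∀ k, G.IsEndo k → k p = p → k q = q → Function.Bijective k

def TopOnComponents (G : LGraph L V) : Prop :=
  ∀ x y, x ≠ y → G.Conn x y → G.ecol x y = ⊤

theorem isRigidPair_of_retract [Finite V] {p q : V} (hpq : p ≠ q) (hconn : G.Conn p q)
    (hne : G.ecol p q ≠ ⊤)
    (hretract : ∀ e, G.IsEndo e → (∀ x, e (e x) = e x) → ¬ Function.Surjective e →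
      (G.induce (Set.range e)).TopOnComponents) :
    G.IsRigidPair p q := by
  intro k hk hkp hkq
  by_contra hbij
  obtain ⟨n, hn⟩ := Finite.exists_iterate_succ_idempotent k
  have hsurj : ¬ Function.Surjective k^[n + 1] := fun h =>
    hbij (Finite.injective_iff_bijective.mp
      (Finite.injective_iff_surjective.mpr h).of_comp)
  have hp : k^[n + 1] p = p := Function.iterate_fixed hkp _
  have hq : k^[n + 1] q = q := Function.iterate_fixed hkq _
  have hconn' := (hk.iterate (n + 1)).conn_induce_range hconn
  simp only [hp, hq] at hconn'
  exact hne (hretract _ (hk.iterate _) hn hsurj _ _ (fun h => hpq (congrArg Subtype.val h))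
    hconn')

/-- For an idempotent power `e` of an endomorphism `p ↦ p, q ↦ u`, the vertex `y := e q` is a
`⊤`-neighbour of `p` and a non-neighbour of `q`; an endomorphism fixing `p, q` and sending `y`
to `u` is bijective by rigidity, hence color-preserving. -/
theorem IsRigidPair.ecol_eq_bot [Finite V] (hMH : G.MH) (hVU : G.VertexUniform) {p q u : V}
    (hrigid : G.IsRigidPair p q) (hpq : p ≠ q) (hne : G.ecol p q ≠ ⊤)
    (hu : G.ecol p u = ⊤) : G.ecol q u = ⊥ := by
  have : Nontrivial L := ⟨⟨_, _, hne⟩⟩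
  have hup : u ≠ p := fun h => bot_ne_top (G.ecol_irrefl p ▸ h ▸ hu)
  have huq : u ≠ q := fun h => hne (h ▸ hu)
  obtain ⟨k, hk, hkp, hkq⟩ := hMH.exists_isEndo_fixing hVU (Set.finite_singleton p)
    (Set.notMem_singleton_iff.mpr hpq.symm) (Set.notMem_singleton_iff.mpr hup)
    (by simp [hu])
  obtain ⟨n, hn⟩ := Finite.exists_iterate_succ_idempotent k
  set y := k^[n + 1] q
  have hpy : G.ecol p y = ⊤ := by
    refine top_unique ?_
    calc ⊤ = G.ecol p (k q) := by rw [hkq, hu]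
      _ ≤ G.ecol p (k^[n] (k q)) :=
         (hk.iterate n).ecol_le_of_apply_eq (Function.iterate_fixed (hkp p rfl) n) _
  have hqy : G.ecol q y = ⊥ := by
    refine le_bot_iff.mp ?_
    calc G.ecol q y ≤ G.ecol (k^[n + 1] q) (k^[n + 1] y) := (hk.iterate _).2 q y
      _ = ⊥ := by rw [show k^[n + 1] y = y from hn q]; exact G.ecol_irrefl y
  have hyp : y ≠ p := fun h => bot_ne_top (G.ecol_irrefl p ▸ h ▸ hpy)
  have hyq : y ≠ q := fun h => hne (h ▸ hpy)
  obtain ⟨k', hk', hk'pq, hk'y⟩ := hMH.exists_isEndo_fixing hVU (Set.toFinite {p, q})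
    (u := y) (v := u) (by simp [hyp, hyq]) (by simp [hup, huq])
    (by simp [hpy, hu, hqy])
  have hk'q : k' q = q := hk'pq q (by simp)
  have hbij := hrigid k' hk' (hk'pq p (by simp)) hk'q
  calc G.ecol q u = G.ecol (k' q) (k' y) := by rw [hk'q, hk'y]
    _ = G.ecol q y := hk'.ecol_apply_of_bijective hbij q y
    _ = ⊥ := hqy

/-- If `χ(p, q) ∉ {⊥, ⊤}`, pick a `⊤`-neighbour `s` of `q`: rigidity of `(q, p)` gives
`χ(p, s) = ⊥`, and then rigidity of `(s, p)` gives `χ(p, q) = ⊥`. -/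
theorem ecol_eq_top_of_adj [Finite V] (hMH : G.MH) (hVU : G.VertexUniform) {x0 y0 : V}
    (h1 : G.ecol x0 y0 = ⊤)
    (hrigid : ∀ p q, p ≠ q → G.Conn p q → G.ecol p q ≠ ⊤ → G.IsRigidPair p q) {p q : V}
    (hadj : G.Adj p q) : G.ecol p q = ⊤ := by
  have hpq : p ≠ q := fun h => hadj (h ▸ G.ecol_irrefl p)
  by_contra hne
  have : Nontrivial L := ⟨⟨_, _, hne⟩⟩
  have hne' : G.ecol q p ≠ ⊤ := G.ecol_symm p q ▸ hne
  obtain ⟨s, hs⟩ := hMH.exists_ecol_eq_top hVU h1 q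
  have hps : G.ecol p s = ⊥ :=
    (hrigid q p hpq.symm (.single hadj.symm) hne').ecol_eq_bot hMH hVU hpq.symm hne' hs
  have hsp : s ≠ p := fun h => hne' (h ▸ hs)
  have hconn : G.Conn s p :=
    Conn.symm ((Relation.ReflTransGen.single hadj).tail (ne_bot_of_le_ne_bot top_ne_bot hs.ge))
  have hne_sp : G.ecol s p ≠ ⊤ := by rw [G.ecol_symm, hps]; exact bot_ne_top
  have hsq : G.ecol s q = ⊤ := by rwa [G.ecol_symm]
  exact hadj ((hrigid s p hsp hconn hne_sp).ecol_eq_bot hMH hVU hsp hne_sp hsq)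

theorem topOnComponents_of_isRigidPair [Finite V] (hMH : G.MH) (hVU : G.VertexUniform)
    {x0 y0 : V} (h1 : G.ecol x0 y0 = ⊤)
    (hrigid : ∀ p q, p ≠ q → G.Conn p q → G.ecol p q ≠ ⊤ → G.IsRigidPair p q) :
    G.TopOnComponents := by
  suffices h : ∀ x z, G.Conn x z → z = x ∨ G.ecol x z = ⊤ from
    fun x y hxy hconn => (h x y hconn).resolve_left hxy.symm
  intro x z hz
  induction hz with
  | refl => exact .inl rfl
  | @tail b c hxb hbc ih =>
    by_cases hcx : c = x
    · exact .inl hcx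
    refine .inr ?_
    rcases ih with rfl | hb
    · exact ecol_eq_top_of_adj hMH hVU h1 hrigid hbc
    by_contra hne
    exact hbc.symm ((hrigid x c (Ne.symm hcx) (hxb.tail hbc) hne).ecol_eq_bot hMH hVU
      (Ne.symm hcx) hne hb)

theorem MH.topOnComponents [Finite V] (hMH : G.MH) (hVU : G.VertexUniform) {x0 y0 : V}
    (h1 : G.ecol x0 y0 = ⊤) : G.TopOnComponents := by
  induction hn : Nat.card V using Nat.strong_induction_on generalizing V with
  | _ n ih =>
    refine topOnComponents_of_isRigidPair hMH hVU h1 fun p q hpq hconn hne => ?_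
    refine isRigidPair_of_retract hpq hconn hne fun e he hidem hsurj => ?_
    obtain ⟨z, hz⟩ := not_forall.mp hsurj
    have hcard : Nat.card (Set.range e) < n := hn ▸ Finite.card_subtype_lt hz
    exact ih _ hcard (hMH.induce_range he hidem) (hVU.induce _)
      (x0 := ⟨e x0, Set.mem_range_self x0⟩) (y0 := ⟨e y0, Set.mem_range_self y0⟩)
      (top_unique (h1 ▸ he.2 x0 y0)) rfl

end LGraph

theorem stmt10_general {L V : Type*} [PartialOrder L] [BoundedOrder L] [Finite V]
    (G : LGraph L V) (hMH : G.MH) (hVU : G.VertexUniform)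
    (x0 y0 : V) (h1 : G.ecol x0 y0 = ⊤) :
    ∀ x y : V, x ≠ y → G.Conn x y → G.ecol x y = ⊤ :=
  hMH.topOnComponents hVU h1

/-- Lemma 4(3). -/
theorem stmt10 {L V : Type*} [PartialOrder L] [BoundedOrder L] [Finite V]
    (hL : IsDiamond L) (G : LGraph L V) (hMH : G.MH) (hVU : G.VertexUniform)
    (x0 y0 : V) (h1 : G.ecol x0 y0 = ⊤) :
    ∀ x y : V, x ≠ y → G.Conn x y → G.ecol x y = ⊤ :=
  stmt10_general G hMH hVU x0 y0 h1
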